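/- Let G be a Borel probability measure on ℝ, ν > 0, z ∈ ℝ, and ρ ∈ (0, e⁻¹/√(2π)). Define Q(z) = ∫ (z−τ)·τ·φ((z−τ)/ν) ν⁻¹ dG(τ) and f_{G,ν}(z) = ∫ φ((z−τ)/ν) ν⁻¹ dG(τ). Then |Q(z)| / ( f_{G,ν}(z) ∨ (ρ/ν) ) ≤ ν · φ₊(ρ) · ( |z| + ν φ₊(ρ) ), where φ₊(ρ) = √(log(1/(2πρ²))). -/

import Mathlib

/-!
Put `t = (z − τ)/ν` and `c = φ₊(ρ)`, so that `φ(c) = ρ`, and the integrand of `Q(z)` is bounded by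
`|t| (|z| + ν|t|) φ(t)`. The tangent-line bound `x + 1 ≤ eˣ` applied to `c|t| − c²` and to
`(t² − c²)/2` gives `|t| φ(t) ≤ (c − 1/c) φ(t) + φ(c)/c` and `t² φ(t) ≤ (c² − 2) φ(t) + 2 φ(c)`.
When `c² > 2`, which is what `ρ < e⁻¹/√(2π)` says, all these coefficients are nonnegative, so the
integrand is at most `A φ(t) + B ρ` with `A, B ≥ 0` and `A + B = c (|z| + ν c)`. Integrating against
`G` bounds `|Q(z)|` by `A ν f_{G,ν}(z) + B ρ ≤ (A + B) · ν (f_{G,ν}(z) ∨ ρ/ν)`.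
-/

open MeasureTheory

/-- The standard normal density `φ(t) = (2π)^{-1/2} exp(−t²/2)`. -/
noncomputable def gaussPdf (t : ℝ) : ℝ := (Real.sqrt (2 * Real.pi))⁻¹ * Real.exp (-(t ^ 2) / 2)

/-- The Gaussian mixture density `f_{G,ν}(z) = ∫ φ((z−τ)/ν) ν⁻¹ dG(τ)`. -/
noncomputable def mixDens (G : Measure ℝ) (ν z : ℝ) : ℝ :=
  ∫ τ, gaussPdf ((z - τ) / ν) * ν⁻¹ ∂G

open Real

/-- `φ₊(ρ)` -/
noncomputable def gaussPdfPosInv (ρ : ℝ) : ℝ := √(log (1 / (2 * π * ρ ^ 2)))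

lemma gaussPdf_pos (t : ℝ) : 0 < gaussPdf t := by
  unfold gaussPdf; positivity

lemma gaussPdf_le (t : ℝ) : gaussPdf t ≤ (√(2 * π))⁻¹ := by
  unfold gaussPdf
  refine mul_le_of_le_one_right (by positivity) (exp_le_one_iff.2 ?_)
  nlinarith [sq_nonneg t]

lemma gaussPdf_mul_exp (t c : ℝ) : gaussPdf t * exp ((t ^ 2 - c ^ 2) / 2) = gaussPdf c := by
  unfold gaussPdf
  rw [mul_assoc, ← exp_add]
  ring_nf

lemma add_one_mul_gaussPdf_le {x t : ℝ} (c : ℝ) (hx : x ≤ (t ^ 2 - c ^ 2) / 2) :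
    (x + 1) * gaussPdf t ≤ gaussPdf c := by
  rw [← gaussPdf_mul_exp t c, mul_comm]
  gcongr
  · exact (gaussPdf_pos t).le
  · exact (add_one_le_exp x).trans (exp_le_exp.2 hx)

lemma abs_mul_gaussPdf_le {c : ℝ} (hc : 0 < c) (t : ℝ) :
    |t| * gaussPdf t ≤ (c - c⁻¹) * gaussPdf t + c⁻¹ * gaussPdf c := by
  have h : (c * |t| - c ^ 2 + 1) * gaussPdf t ≤ gaussPdf c :=
    add_one_mul_gaussPdf_le c (by nlinarith [sq_abs t, sq_nonneg (|t| - c)])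
  have hexpand : c⁻¹ * ((c * |t| - c ^ 2 + 1) * gaussPdf t) =
      |t| * gaussPdf t - (c - c⁻¹) * gaussPdf t := by
    field_simp; ring
  linarith [mul_le_mul_of_nonneg_left h (inv_pos.2 hc).le]

lemma sq_mul_gaussPdf_le (c t : ℝ) :
    t ^ 2 * gaussPdf t ≤ (c ^ 2 - 2) * gaussPdf t + 2 * gaussPdf c := by
  linarith [add_one_mul_gaussPdf_le c (le_refl ((t ^ 2 - c ^ 2) / 2))]

lemma abs_mul_add_mul_gaussPdf_le {a ν c : ℝ} (ha : 0 ≤ a) (hν : 0 ≤ ν) (hc : 0 < c) (t : ℝ) :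
    |t| * (a + ν * |t|) * gaussPdf t ≤
      (a * (c - c⁻¹) + ν * (c ^ 2 - 2)) * gaussPdf t + (a * c⁻¹ + 2 * ν) * gaussPdf c := by
  have h1 := mul_le_mul_of_nonneg_left (abs_mul_gaussPdf_le hc t) ha
  have h2 := mul_le_mul_of_nonneg_left (sq_mul_gaussPdf_le c t) hν
  have hexpand : |t| * (a + ν * |t|) * gaussPdf t =
      a * (|t| * gaussPdf t) + ν * (t ^ 2 * gaussPdf t) := by
    rw [← sq_abs t]; ring
  linarith

lemma gaussPdf_gaussPdfPosInv {ρ : ℝ} (hρ : 0 < ρ) (hρ' : ρ ≤ (√(2 * π))⁻¹) :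
    gaussPdf (gaussPdfPosInv ρ) = ρ := by
  have h2π : 0 < 2 * π := by positivity
  have hle : 2 * π * ρ ^ 2 ≤ 1 := by
    have h : ρ * √(2 * π) ≤ 1 :=
      calc ρ * √(2 * π) ≤ (√(2 * π))⁻¹ * √(2 * π) := by gcongr
        _ = 1 := inv_mul_cancel₀ (sqrt_pos.2 h2π).ne'
    nlinarith [sq_sqrt h2π.le, mul_nonneg hρ.le (sqrt_nonneg (2 * π))]
  have hsq : gaussPdfPosInv ρ ^ 2 = log (1 / (2 * π * ρ ^ 2)) :=
    sq_sqrt (log_nonneg (by rw [le_div_iff₀ (by positivity)]; linarith))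
  refine (pow_left_inj₀ (gaussPdf_pos _).le hρ.le two_ne_zero).1 ?_
  have hexp : -gaussPdfPosInv ρ ^ 2 / 2 + -gaussPdfPosInv ρ ^ 2 / 2 = log (2 * π * ρ ^ 2) := by
    rw [hsq, one_div, log_inv]; ring
  unfold gaussPdf
  rw [mul_pow, inv_pow, sq_sqrt h2π.le, sq (exp _), ← exp_add, hexp, exp_log (by positivity)]
  field_simp

lemma two_lt_sq_gaussPdfPosInv {ρ : ℝ} (hρ : 0 < ρ) (hρ' : ρ < (exp 1)⁻¹ / √(2 * π)) :
    2 < gaussPdfPosInv ρ ^ 2 := by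
  have hs : 0 < √(2 * π) := by positivity
  have h : ρ * √(2 * π) * exp 1 < 1 :=
    calc ρ * √(2 * π) * exp 1 < (exp 1)⁻¹ / √(2 * π) * √(2 * π) * exp 1 := by gcongr
      _ = 1 := by field_simp
  have hlog : 2 < log (1 / (2 * π * ρ ^ 2)) := by
    rw [lt_log_iff_exp_lt (by positivity), lt_div_iff₀ (by positivity)]
    have hexp : exp 2 * (2 * π * ρ ^ 2) = (ρ * √(2 * π) * exp 1) ^ 2 := by
      rw [mul_pow, mul_pow, sq_sqrt (by positivity), ← exp_nat_mul]; norm_num; ring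
    nlinarith [mul_pos (mul_pos hρ hs) (exp_pos 1)]
  rw [gaussPdfPosInv, sq_sqrt (by linarith)]
  exact hlog

lemma abs_integral_le_mul_sup {α : Type*} [MeasurableSpace α] {μ : Measure α}
    [IsProbabilityMeasure μ] {F g : α → ℝ} {a b r : ℝ} (ha : 0 ≤ a) (hb : 0 ≤ b)
    (hg : Integrable g μ) (hF : ∀ x, |F x| ≤ a * g x + b * r) :
    |∫ x, F x ∂μ| ≤ (a + b) * (∫ x, g x ∂μ ⊔ r) := by
  have hbound : Integrable (fun x => a * g x + b * r) μ :=
    (hg.const_mul a).add (integrable_const _)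
  have h := norm_integral_le_of_norm_le hbound
    (ae_of_all μ fun x => (norm_eq_abs (F x)).trans_le (hF x))
  rw [integral_add (hg.const_mul a) (integrable_const _), integral_const_mul] at h
  simp only [integral_const, probReal_univ, one_smul, Real.norm_eq_abs] at h
  nlinarith [mul_le_mul_of_nonneg_left (le_sup_left : ∫ x, g x ∂μ ≤ _ ⊔ r) ha,
    mul_le_mul_of_nonneg_left (le_sup_right : r ≤ ∫ x, g x ∂μ ⊔ r) hb]

lemma integrable_gaussPdf_comp {α : Type*} [MeasurableSpace α] {μ : Measure α}
    [IsFiniteMeasure μ] {f : α → ℝ} (hf : Measurable f) :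
    Integrable (fun x => gaussPdf (f x)) μ := by
  refine Integrable.of_bound ?_ (√(2 * π))⁻¹ (ae_of_all μ fun x => ?_)
  · have hcont : Continuous gaussPdf := by unfold gaussPdf; fun_prop
    exact (hcont.measurable.comp hf).aestronglyMeasurable
  · rw [Real.norm_eq_abs, abs_of_pos (gaussPdf_pos _)]
    exact gaussPdf_le _

lemma abs_scaleScore_le {ν : ℝ} (hν : 0 < ν) (z τ : ℝ) :
    |(z - τ) * τ * gaussPdf ((z - τ) / ν) * ν⁻¹| ≤
      |(z - τ) / ν| * (|z| + ν * |(z - τ) / ν|) * gaussPdf ((z - τ) / ν) := by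
  have hτ : |τ| ≤ |z| + ν * |(z - τ) / ν| := by
    rw [abs_div, abs_of_pos hν, mul_div_cancel₀ _ hν.ne']
    simpa using abs_sub z (z - τ)
  have hφ := (gaussPdf_pos ((z - τ) / ν)).le
  calc _ = |(z - τ) / ν| * |τ| * gaussPdf ((z - τ) / ν) := by
        rw [abs_mul, abs_mul, abs_mul, abs_of_nonneg hφ, abs_inv, abs_div]; ring
    _ ≤ _ := by gcongr

/-- Bound on the scale-score term: with `Q(z) = ∫ (z−τ)τ φ((z−τ)/ν) ν⁻¹ dG(τ)` and
`φ₊(ρ) = √(log(1/(2πρ²)))`, for every `ρ ∈ (0, e⁻¹/√(2π))`,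
`|Q(z)| / (f_{G,ν}(z) ∨ (ρ/ν)) ≤ ν φ₊(ρ) (|z| + ν φ₊(ρ))`. -/
theorem Q_bound
    (G : Measure ℝ) [IsProbabilityMeasure G] (ν : ℝ) (hν : 0 < ν)
    (z : ℝ) (ρ : ℝ)
    (hρ : ρ ∈ Set.Ioo (0:ℝ) ((Real.exp 1)⁻¹ / Real.sqrt (2 * Real.pi))) :
    |∫ τ, (z - τ) * τ * gaussPdf ((z - τ) / ν) * ν⁻¹ ∂G|
        / (mixDens G ν z ⊔ (ρ / ν))
      ≤ ν * Real.sqrt (Real.log (1 / (2 * Real.pi * ρ ^ 2))) *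
          (|z| + ν * Real.sqrt (Real.log (1 / (2 * Real.pi * ρ ^ 2)))) := by
  obtain ⟨hρ0, hρ1⟩ := hρ
  show _ ≤ ν * gaussPdfPosInv ρ * (|z| + ν * gaussPdfPosInv ρ)
  set c := gaussPdfPosInv ρ
  have hc2 : 2 < c ^ 2 := two_lt_sq_gaussPdfPosInv hρ0 hρ1
  have hc : 1 < c := by nlinarith [show 0 ≤ c from sqrt_nonneg _]
  have hφc : gaussPdf c = ρ := gaussPdf_gaussPdfPosInv hρ0 <| hρ1.le.trans <| by
    rw [div_eq_mul_inv]
    exact mul_le_of_le_one_left (by positivity) (inv_le_one_of_one_le₀ (one_le_exp zero_le_one))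
  set A := |z| * (c - c⁻¹) + ν * (c ^ 2 - 2)
  set B := |z| * c⁻¹ + 2 * ν
  have hA : 0 ≤ A := by
    have : c⁻¹ ≤ c := (inv_le_one_of_one_le₀ hc.le).trans hc.le
    have := hν.le
    positivity
  have hB : 0 ≤ B := by positivity
  have hF : ∀ τ, |(z - τ) * τ * gaussPdf ((z - τ) / ν) * ν⁻¹| ≤
      (ν * A) * (gaussPdf ((z - τ) / ν) * ν⁻¹) + (ν * B) * (ρ / ν) := fun τ =>
    calc _ ≤ _ := abs_scaleScore_le hν z τ
      _ ≤ A * gaussPdf ((z - τ) / ν) + B * gaussPdf c :=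
        abs_mul_add_mul_gaussPdf_le (abs_nonneg z) hν.le (by linarith) _
      _ = _ := by rw [hφc]; field_simp
  have hQ := abs_integral_le_mul_sup (mul_nonneg hν.le hA) (mul_nonneg hν.le hB)
    ((integrable_gaussPdf_comp (μ := G) (by fun_prop)).mul_const ν⁻¹) hF
  rw [div_le_iff₀ (lt_sup_of_lt_right (div_pos hρ0 hν))]
  calc _ ≤ _ := hQ
    _ = _ := by unfold mixDens; field_simp; ring
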